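/- arXiv:1704.07865 — 3 statements merged into one kernel-verified Lean document; each statement's English description precedes it below -/
import Mathlib

section
/- Let p = (p_1,…,p_M) and q = (q_1,…,q_M) be vectors with strictly positive entries satisfying Σ_{m=1}^M p_m = Σ_{m=1}^M q_m. Then lim_{β→0⁺} d_β(p,q) = d_KL(p,q), i.e., the density power divergence tends to the Kullback–Leibler divergence as the tuning parameter β tends to 0 from the right. -/
open Real Finset Filter Topology

/-! Writing `d_β(p,q) = ∑ (q^{β+1} - q^β p) + ∑ p ((p^β - 1)/β - (q^β - 1)/β)`, the first sum tends to
`∑ (q - p) = 0` and each difference quotient `(x^β - 1)/β` tends to `log x`, the derivative of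
`β ↦ x^β` at `0`. -/

theorem tendsto_dpd_summand {x y : ℝ} (hx : 0 < x) (hy : 0 < y) :
    Tendsto (fun β : ℝ => y ^ (β + 1) - (1 + 1 / β) * y ^ β * x + (1 / β) * x ^ (1 + β))
      (𝓝[>] 0) (𝓝 (y - x + x * log (x / y))) := by
  have hpow : Tendsto (fun β : ℝ => y ^ (β + 1) - y ^ β * x) (𝓝[>] 0) (𝓝 (y - x)) := by
    have hcont : Continuous (fun β : ℝ => y ^ (β + 1) - y ^ β * x) := by
      have := continuous_const_rpow hy.ne'
      fun_prop
    simpa using (hcont.tendsto 0).mono_left nhdsWithin_le_nhds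
  have hlog : Tendsto (fun β : ℝ => x * (β⁻¹ * (x ^ β - 1) - β⁻¹ * (y ^ β - 1)))
      (𝓝[>] 0) (𝓝 (x * log (x / y))) := by
    rw [log_div hx.ne' hy.ne']
    exact ((tendsto_rpow_sub_one_log hx).sub (tendsto_rpow_sub_one_log hy)).const_mul x
  refine (hpow.add hlog).congr' ?_
  filter_upwards [self_mem_nhdsWithin] with β (hβ : 0 < β)
  rw [add_comm 1 β, rpow_add hx, rpow_one]
  field_simp
  ring

/-- for vectors with strictly positive entries and equal total mass,
the density power divergence `d_β(p,q)` tends to the Kullback–Leibler divergence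
`d_KL(p,q)` as `β → 0⁺`. -/
theorem dpd_tendsto_kl (M : ℕ) (p q : Fin M → ℝ)
    (hp : ∀ m, 0 < p m) (hq : ∀ m, 0 < q m)
    (hsum : ∑ m, p m = ∑ m, q m) :
    Tendsto
      (fun β : ℝ => ∑ m,
        (q m ^ (β + 1) - (1 + 1 / β) * q m ^ β * p m + (1 / β) * p m ^ (1 + β)))
      (nhdsWithin 0 (Set.Ioi 0))
      (nhds (∑ m, p m * Real.log (p m / q m))) := by
  have hlim := tendsto_finsetSum univ fun m _ => tendsto_dpd_summand (hp m) (hq m)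
  have hmass : ∑ m, (q m - p m + p m * log (p m / q m)) = ∑ m, p m * log (p m / q m) := by
    rw [sum_add_distrib, sum_sub_distrib, hsum, sub_self, zero_add]
  rwa [hmass] at hlim
end

section
/- Fix β > 0 and data n_{ij} ∈ {0,…,K}, and write π_{ij}(α) = F_{ij}(α). Define D(α) = (1/(IJ))·Σ_{i=1}^I Σ_{j=1}^J [π_{ij}(α)^{β+1} + (1 − π_{ij}(α))^{β+1} − ((1+β)/β)·((n_{ij}/K)·π_{ij}(α)^β + ((K − n_{ij})/K)·(1 − π_{ij}(α))^β)]. Then for every α = (α₀, α₁) with α₀ > 0, IJ·D(α) = (IJ)^{β+1}·d_β(p̂, p(α)) − (1/β)·Σ_{i=1}^I Σ_{j=1}^J [(n_{ij}/K)^{1+β} + ((K − n_{ij})/K)^{1+β}]; consequently, a parameter α with α₀ > 0 minimizes D over {α : α₀ > 0} if and only if it minimizes α ↦ d_β(p̂, p(α)) over the same set. -/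
/-!
`p(α)` and `p̂` are `1/(IJ)` times the vectors of cell probabilities `(F, 1 - F)` and cell
frequencies `(n/K, (K - n)/K)`. Since `d_β(p/c, q/c) = c^{-(β+1)} d_β(p, q)` for nonnegative
vectors, `(IJ)^{β+1} d_β(p̂, p(α))` is the divergence between the unscaled vectors, which splits
into `IJ·D(α)` plus the term `(1/β) Σ (frequency)^{1+β}` not depending on `α`. So `D` is a
positive affine function of `α ↦ d_β(p̂, p(α))` and both have the same minimizers.
-/

open Real BigOperators Finset

/-- Lifetime CDF in the one-shot device exponential model. -/
noncomputable def Fcdf (α0 α1 w t : ℝ) : ℝ :=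
  1 - Real.exp (-(α0 * Real.exp (α1 * w) * t))

/-- Density power divergence with tuning parameter `β > 0`. -/
noncomputable def dPD (β : ℝ) {M : Type*} [Fintype M] (p q : M → ℝ) : ℝ :=
  ∑ m, (q m ^ (β + 1) - (1 + 1 / β) * q m ^ β * p m + (1 / β) * p m ^ (1 + β))

/-- Theoretical probability vector `p(α)`. -/
noncomputable def pth (I J : ℕ) (w : Fin I → ℝ) (t : Fin J → ℝ) (α0 α1 : ℝ) :
    Fin I × Fin J × Fin 2 → ℝ :=
  fun x =>
    if x.2.2 = 0 then Fcdf α0 α1 (w x.1) (t x.2.1) / (I * J)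
    else (1 - Fcdf α0 α1 (w x.1) (t x.2.1)) / (I * J)

/-- Observed probability vector `p̂`. -/
noncomputable def phat (I J K : ℕ) (n : Fin I → Fin J → ℕ) :
    Fin I × Fin J × Fin 2 → ℝ :=
  fun x =>
    if x.2.2 = 0 then (n x.1 x.2.1 : ℝ) / (I * J * K)
    else ((K : ℝ) - (n x.1 x.2.1 : ℝ)) / (I * J * K)

/-- The simplified MDPDE objective `D(α)` of Definition 3 / display (4b). -/
noncomputable def Dobj (I J K : ℕ) (w : Fin I → ℝ) (t : Fin J → ℝ)
    (n : Fin I → Fin J → ℕ) (β α0 α1 : ℝ) : ℝ :=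
  (1 / (I * J : ℝ)) * ∑ i, ∑ j,
    (Fcdf α0 α1 (w i) (t j) ^ (β + 1) + (1 - Fcdf α0 α1 (w i) (t j)) ^ (β + 1)
      - ((1 + β) / β) *
        (((n i j : ℝ) / K) * Fcdf α0 α1 (w i) (t j) ^ β
          + (((K : ℝ) - (n i j : ℝ)) / K) * (1 - Fcdf α0 α1 (w i) (t j)) ^ β))

lemma Fcdf_nonneg {α0 α1 w t : ℝ} (hα0 : 0 ≤ α0) (ht : 0 ≤ t) : 0 ≤ Fcdf α0 α1 w t :=
  sub_nonneg.2 <| exp_le_one_iff.2 <| neg_nonpos.2 <| by positivity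

lemma Fcdf_le_one (α0 α1 w t : ℝ) : Fcdf α0 α1 w t ≤ 1 :=
  sub_le_self _ (exp_pos _).le

lemma rpow_succ_mul_dPD_div (β : ℝ) {M : Type*} [Fintype M] {p q : M → ℝ} {c : ℝ}
    (hc : 0 < c) (hp : ∀ m, 0 ≤ p m) (hq : ∀ m, 0 ≤ q m) :
    c ^ (β + 1) * dPD β (fun m => p m / c) (fun m => q m / c) = dPD β p q := by
  rw [dPD, dPD, mul_sum]
  refine sum_congr rfl fun m _ => ?_
  simp only [div_rpow (hp m) hc.le, div_rpow (hq m) hc.le]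
  have hcβ : c ^ β ≠ 0 := (rpow_pos_of_pos hc β).ne'
  rw [add_comm 1 β, rpow_add hc, rpow_one]
  field_simp

noncomputable def cellProb (I J : ℕ) (w : Fin I → ℝ) (t : Fin J → ℝ) (α0 α1 : ℝ) :
    Fin I × Fin J × Fin 2 → ℝ :=
  fun x => if x.2.2 = 0 then Fcdf α0 α1 (w x.1) (t x.2.1) else 1 - Fcdf α0 α1 (w x.1) (t x.2.1)

noncomputable def cellFreq (I J K : ℕ) (n : Fin I → Fin J → ℕ) : Fin I × Fin J × Fin 2 → ℝ :=
  fun x => if x.2.2 = 0 then (n x.1 x.2.1 : ℝ) / K else ((K : ℝ) - n x.1 x.2.1) / K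

section Cells

variable {I J K : ℕ}

lemma pth_eq_cellProb_div (w : Fin I → ℝ) (t : Fin J → ℝ) (α0 α1 : ℝ) :
    pth I J w t α0 α1 = fun x => cellProb I J w t α0 α1 x / (I * J) := by
  funext x
  simp only [pth, cellProb, ite_div]

lemma phat_eq_cellFreq_div (n : Fin I → Fin J → ℕ) :
    phat I J K n = fun x => cellFreq I J K n x / (I * J) := by
  funext x
  simp only [phat, cellFreq, ite_div, div_div, mul_comm (K : ℝ)]

lemma cellProb_nonneg {w : Fin I → ℝ} {t : Fin J → ℝ} (ht : ∀ j, 0 ≤ t j) {α0 : ℝ}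
    (hα0 : 0 ≤ α0) (α1 : ℝ) (x : Fin I × Fin J × Fin 2) : 0 ≤ cellProb I J w t α0 α1 x := by
  unfold cellProb
  split_ifs
  · exact Fcdf_nonneg hα0 (ht _)
  · exact sub_nonneg.2 (Fcdf_le_one _ _ _ _)

lemma cellFreq_nonneg {n : Fin I → Fin J → ℕ} (hn : ∀ i j, n i j ≤ K)
    (x : Fin I × Fin J × Fin 2) : 0 ≤ cellFreq I J K n x := by
  unfold cellFreq
  split_ifs
  · positivity
  · exact div_nonneg (sub_nonneg.2 (by exact_mod_cast hn _ _)) K.cast_nonneg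

lemma dPD_cellFreq_cellProb (w : Fin I → ℝ) (t : Fin J → ℝ) (n : Fin I → Fin J → ℕ)
    {β : ℝ} (hβ : β ≠ 0) (α0 α1 : ℝ) :
    dPD β (cellFreq I J K n) (cellProb I J w t α0 α1) =
      ∑ i, ∑ j,
        (Fcdf α0 α1 (w i) (t j) ^ (β + 1) + (1 - Fcdf α0 α1 (w i) (t j)) ^ (β + 1)
          - ((1 + β) / β) *
            (((n i j : ℝ) / K) * Fcdf α0 α1 (w i) (t j) ^ β
              + (((K : ℝ) - (n i j : ℝ)) / K) * (1 - Fcdf α0 α1 (w i) (t j)) ^ β))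
      + (1 / β) * ∑ i, ∑ j,
          (((n i j : ℝ) / K) ^ (1 + β) + (((K : ℝ) - (n i j : ℝ)) / K) ^ (1 + β)) := by
  simp only [dPD, Fintype.sum_prod_type, Fin.sum_univ_two, mul_sum, ← sum_add_distrib]
  refine sum_congr rfl fun i _ => sum_congr rfl fun j _ => ?_
  simp only [cellFreq, cellProb, Fin.one_eq_zero_iff, if_true, OfNat.ofNat_ne_one, if_false]
  field_simp
  ring

end Cells

lemma le_iff_le_of_mul_eq_mul_sub {c A C u v u' v' : ℝ} (hc : 0 < c) (hA : 0 < A)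
    (hu : c * u = A * v - C) (hu' : c * u' = A * v' - C) : u ≤ u' ↔ v ≤ v' := by
  rw [← mul_le_mul_iff_right₀ hc, hu, hu', sub_le_sub_iff_right, mul_le_mul_iff_right₀ hA]

theorem Dobj_vs_dpd_general (I J K : ℕ) (hI : 1 ≤ I) (hJ : 1 ≤ J)
    (w : Fin I → ℝ) (t : Fin J → ℝ) (ht : ∀ j, 0 < t j)
    (n : Fin I → Fin J → ℕ) (hn : ∀ i j, n i j ≤ K)
    (β : ℝ) (hβ : 0 < β) :
    (∀ α0 α1 : ℝ, 0 < α0 →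
      (I * J : ℝ) * Dobj I J K w t n β α0 α1 =
        (I * J : ℝ) ^ (β + 1) * dPD β (phat I J K n) (pth I J w t α0 α1)
          - (1 / β) * ∑ i, ∑ j,
              (((n i j : ℝ) / K) ^ (1 + β) + (((K : ℝ) - (n i j : ℝ)) / K) ^ (1 + β)))
    ∧
    (∀ α0 α1 : ℝ, 0 < α0 →
      ((∀ α0' α1' : ℝ, 0 < α0' → Dobj I J K w t n β α0 α1 ≤ Dobj I J K w t n β α0' α1')
        ↔
       (∀ α0' α1' : ℝ, 0 < α0' →
          dPD β (phat I J K n) (pth I J w t α0 α1) ≤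
            dPD β (phat I J K n) (pth I J w t α0' α1')))) := by
  have hIJ : (0 : ℝ) < I * J := by positivity
  have hid : ∀ α0 α1 : ℝ, 0 < α0 →
      (I * J : ℝ) * Dobj I J K w t n β α0 α1 =
        (I * J : ℝ) ^ (β + 1) * dPD β (phat I J K n) (pth I J w t α0 α1)
          - (1 / β) * ∑ i, ∑ j,
              (((n i j : ℝ) / K) ^ (1 + β) + (((K : ℝ) - (n i j : ℝ)) / K) ^ (1 + β)) := by
    intro α0 α1 hα0
    rw [phat_eq_cellFreq_div, pth_eq_cellProb_div, rpow_succ_mul_dPD_div β hIJ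
      (cellFreq_nonneg hn) (cellProb_nonneg (fun j => (ht j).le) hα0.le α1),
      dPD_cellFreq_cellProb w t n hβ.ne', Dobj, ← mul_assoc, mul_one_div_cancel hIJ.ne', one_mul]
    ring
  refine ⟨hid, fun α0 α1 hα0 => forall_congr' fun α0' => forall_congr' fun α1' =>
    forall_congr' fun hα0' => ?_⟩
  exact le_iff_le_of_mul_eq_mul_sub hIJ (rpow_pos_of_pos hIJ _) (hid α0 α1 hα0) (hid α0' α1' hα0')

/-- `IJ·D(α) = (IJ)^{β+1} d_β(p̂,p(α)) − (1/β) Σ[(n/K)^{1+β} + ((K−n)/K)^{1+β}]`,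
hence minimizing `D` over `{α₀ > 0}` is equivalent to minimizing `α ↦ d_β(p̂, p(α))`. -/
theorem Dobj_vs_dpd (I J K : ℕ) (hI : 1 ≤ I) (hJ : 1 ≤ J) (hK : 1 ≤ K)
    (w : Fin I → ℝ) (t : Fin J → ℝ) (hw : ∀ i, 0 < w i) (ht : ∀ j, 0 < t j)
    (n : Fin I → Fin J → ℕ) (hn : ∀ i j, n i j ≤ K)
    (β : ℝ) (hβ : 0 < β) :
    (∀ α0 α1 : ℝ, 0 < α0 →
      (I * J : ℝ) * Dobj I J K w t n β α0 α1 =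
        (I * J : ℝ) ^ (β + 1) * dPD β (phat I J K n) (pth I J w t α0 α1)
          - (1 / β) * ∑ i, ∑ j,
              (((n i j : ℝ) / K) ^ (1 + β) + (((K : ℝ) - (n i j : ℝ)) / K) ^ (1 + β)))
    ∧
    (∀ α0 α1 : ℝ, 0 < α0 →
      ((∀ α0' α1' : ℝ, 0 < α0' → Dobj I J K w t n β α0 α1 ≤ Dobj I J K w t n β α0' α1')
        ↔
       (∀ α0' α1' : ℝ, 0 < α0' →
          dPD β (phat I J K n) (pth I J w t α0 α1) ≤
            dPD β (phat I J K n) (pth I J w t α0' α1')))) :=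
  Dobj_vs_dpd_general I J K hI hJ w t ht n hn β hβ
end

section
/- Fix β > 0 and data n_{ij} ∈ {0,…,K}. For α = (α₀, α₁) with α₀ > 0, both partial derivatives of the map α ↦ d_β(p̂, p(α)) vanish at α if and only if the two estimating equations hold: Σ_{i=1}^I Σ_{j=1}^J (K·F_{ij}(α) − n_{ij})·f_{ij}(α)·t_j·[F_{ij}(α)^{β−1} + (1 − F_{ij}(α))^{β−1}] = 0 and Σ_{i=1}^I Σ_{j=1}^J (K·F_{ij}(α) − n_{ij})·f_{ij}(α)·t_j·w_i·[F_{ij}(α)^{β−1} + (1 − F_{ij}(α))^{β−1}] = 0. -/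
open Real BigOperators Finset

/-- Lifetime density in the one-shot device exponential model. -/
noncomputable def fpdf (α0 α1 w t : ℝ) : ℝ :=
  α0 * Real.exp (α1 * w) * Real.exp (-(α0 * Real.exp (α1 * w) * t))

/-- The DPD objective `α ↦ d_β(p̂, p(α))` as a function of the parameter. -/
noncomputable def dObj (I J K : ℕ) (w : Fin I → ℝ) (t : Fin J → ℝ)
    (n : Fin I → Fin J → ℕ) (β α0 α1 : ℝ) : ℝ :=
  dPD β (phat I J K n) (pth I J w t α0 α1)

/-!
Each pair `(i, j)` contributes two cells `F/(IJ)` and `(1-F)/(IJ)` to `d_β(p̂, p(α))`, and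
`q ↦ q^(β+1) - (1+1/β) q^β p` has derivative `(β+1) q^(β-1) (q - p)`. The two cell residuals
`F/(IJ) - n/(IJK)` and `(1-F)/(IJ) - (K-n)/(IJK)` are opposite, so by the chain rule each partial
derivative is a fixed positive constant times the corresponding estimating sum, using
`∂F/∂α₀ = f t / α₀` and `∂F/∂α₁ = f t w`.
-/

lemma Fcdf_pos {α0 α1 w t : ℝ} (hα0 : 0 < α0) (ht : 0 < t) : 0 < Fcdf α0 α1 w t := by
  have : 0 < α0 * Real.exp (α1 * w) * t := by positivity
  simpa [Fcdf] using this

lemma Fcdf_lt_one (α0 α1 w t : ℝ) : Fcdf α0 α1 w t < 1 := by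
  simpa [Fcdf] using Real.exp_pos (-(α0 * Real.exp (α1 * w) * t))

lemma hasDerivAt_Fcdf_fst {α0 : ℝ} (hα0 : α0 ≠ 0) (α1 w t : ℝ) :
    HasDerivAt (fun a => Fcdf a α1 w t) (fpdf α0 α1 w t * t / α0) α0 := by
  have h :=
    ((((hasDerivAt_id α0).mul_const (Real.exp (α1 * w))).mul_const t).fun_neg.exp).const_sub 1
  refine h.congr_deriv ?_
  simp only [fpdf, id]
  field_simp

lemma hasDerivAt_Fcdf_snd (α0 α1 w t : ℝ) :
    HasDerivAt (fun a => Fcdf α0 a w t) (fpdf α0 α1 w t * t * w) α1 := by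
  have h :=
    ((((((hasDerivAt_id α1).mul_const w).exp).const_mul α0).mul_const t).fun_neg.exp).const_sub 1
  refine h.congr_deriv ?_
  simp only [fpdf, id]
  ring

lemma hasDerivAt_dpd_summand {β : ℝ} (hβ : β ≠ 0) (p : ℝ) {q : ℝ} (hq : 0 < q) :
    HasDerivAt (fun q : ℝ => q ^ (β + 1) - (1 + 1 / β) * q ^ β * p + (1 / β) * p ^ (1 + β))
      ((β + 1) * q ^ (β - 1) * (q - p)) q := by
  have h1 := Real.hasDerivAt_rpow_const (p := β + 1) (Or.inl hq.ne')
  have h2 := Real.hasDerivAt_rpow_const (p := β) (Or.inl hq.ne')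
  refine ((h1.fun_sub ((h2.const_mul (1 + 1 / β)).mul_const p)).add_const
    ((1 / β) * p ^ (1 + β))).congr_deriv ?_
  have hsplit : q ^ β = q ^ (β - 1) * q := by
    rw [← Real.rpow_add_one hq.ne', sub_add_cancel]
  rw [add_sub_cancel_right, hsplit]
  field_simp

lemma hasDerivAt_dPD {M : Type*} [Fintype M] {β : ℝ} (hβ : β ≠ 0) (p : M → ℝ)
    {q : M → ℝ → ℝ} {q' : M → ℝ} {x : ℝ} (hq : ∀ m, HasDerivAt (q m) (q' m) x)
    (hpos : ∀ m, 0 < q m x) :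
    HasDerivAt (fun a => dPD β p (fun m => q m a))
      (∑ m, (β + 1) * q m x ^ (β - 1) * (q m x - p m) * q' m) x :=
  HasDerivAt.fun_sum fun m _ => (hasDerivAt_dpd_summand hβ (p m) (hpos m)).comp x (hq m)

lemma dpd_binary_cell_eq {β c K F F' n : ℝ} (hc : 0 < c) (hK : K ≠ 0) (hF0 : 0 < F)
    (hF1 : F < 1) :
    (β + 1) * (F / c) ^ (β - 1) * (F / c - n / (c * K)) * (F' / c)
      + (β + 1) * ((1 - F) / c) ^ (β - 1) * ((1 - F) / c - (K - n) / (c * K)) * (-F' / c)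
      = (β + 1) / (c ^ (β + 1) * K) *
          ((K * F - n) * F' * (F ^ (β - 1) + (1 - F) ^ (β - 1))) := by
  have hcβ : c ^ (β + 1) = c ^ (β - 1) * c * c := by
    rw [← Real.rpow_add_one hc.ne', ← Real.rpow_add_one hc.ne']
    ring_nf
  have hcβ0 : c ^ (β - 1) ≠ 0 := (Real.rpow_pos_of_pos hc _).ne'
  rw [Real.div_rpow hF0.le hc.le, Real.div_rpow (by linarith) hc.le, hcβ]
  field_simp
  ring

lemma hasDerivAt_dPD_phat {I J K : ℕ} (hI : 0 < I) (hJ : 0 < J) (hK : K ≠ 0)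
    (n : Fin I → Fin J → ℕ) {β : ℝ} (hβ : β ≠ 0) {F : Fin I → Fin J → ℝ → ℝ}
    {F' : Fin I → Fin J → ℝ} {x : ℝ} (hF : ∀ i j, HasDerivAt (F i j) (F' i j) x)
    (hF0 : ∀ i j, 0 < F i j x) (hF1 : ∀ i j, F i j x < 1) :
    HasDerivAt (fun a => dPD β (phat I J K n) fun m =>
        if m.2.2 = 0 then F m.1 m.2.1 a / (I * J) else (1 - F m.1 m.2.1 a) / (I * J))
      ((β + 1) / (((I : ℝ) * J) ^ (β + 1) * K) * ∑ i, ∑ j,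
        ((K : ℝ) * F i j x - n i j) * F' i j *
          (F i j x ^ (β - 1) + (1 - F i j x) ^ (β - 1))) x := by
  have hc : (0 : ℝ) < I * J := by positivity
  have hq : ∀ m : Fin I × Fin J × Fin 2, HasDerivAt
      (fun a => if m.2.2 = 0 then F m.1 m.2.1 a / (I * J) else (1 - F m.1 m.2.1 a) / (I * J))
      (if m.2.2 = 0 then F' m.1 m.2.1 / (I * J) else -F' m.1 m.2.1 / (I * J)) x := by
    rintro ⟨i, j, k⟩
    fin_cases k
    · exact (hF i j).div_const _
    · exact ((hF i j).const_sub 1).div_const _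
  have hpos : ∀ m : Fin I × Fin J × Fin 2,
      0 < if m.2.2 = 0 then F m.1 m.2.1 x / (I * J) else (1 - F m.1 m.2.1 x) / (I * J) := by
    rintro ⟨i, j, k⟩
    fin_cases k
    · exact div_pos (hF0 i j) hc
    · exact div_pos (sub_pos.2 (hF1 i j)) hc
  refine (hasDerivAt_dPD hβ (phat I J K n) hq hpos).congr_deriv ?_
  simp only [Fintype.sum_prod_type, Fin.sum_univ_two, phat, mul_sum]
  refine sum_congr rfl fun i _ => sum_congr rfl fun j _ => ?_
  exact dpd_binary_cell_eq hc (Nat.cast_ne_zero.2 hK) (hF0 i j) (hF1 i j)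

lemma hasDerivAt_dObj_fst {I J K : ℕ} (hI : 0 < I) (hJ : 0 < J) (hK : K ≠ 0) (w : Fin I → ℝ)
    {t : Fin J → ℝ} (ht : ∀ j, 0 < t j) (n : Fin I → Fin J → ℕ) {β : ℝ} (hβ : β ≠ 0)
    {α0 : ℝ} (hα0 : 0 < α0) (α1 : ℝ) :
    HasDerivAt (fun a => dObj I J K w t n β a α1)
      ((β + 1) / (((I : ℝ) * J) ^ (β + 1) * K) / α0 * ∑ i, ∑ j,
        ((K : ℝ) * Fcdf α0 α1 (w i) (t j) - n i j) * fpdf α0 α1 (w i) (t j) * t j *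
          (Fcdf α0 α1 (w i) (t j) ^ (β - 1) + (1 - Fcdf α0 α1 (w i) (t j)) ^ (β - 1))) α0 := by
  refine (hasDerivAt_dPD_phat hI hJ hK n hβ
    (fun i j => hasDerivAt_Fcdf_fst hα0.ne' α1 (w i) (t j))
    (fun i j => Fcdf_pos hα0 (ht j)) (fun i j => Fcdf_lt_one α0 α1 (w i) (t j))).congr_deriv ?_
  simp only [mul_sum]
  exact sum_congr rfl fun i _ => sum_congr rfl fun j _ => by ring

lemma hasDerivAt_dObj_snd {I J K : ℕ} (hI : 0 < I) (hJ : 0 < J) (hK : K ≠ 0) (w : Fin I → ℝ)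
    {t : Fin J → ℝ} (ht : ∀ j, 0 < t j) (n : Fin I → Fin J → ℕ) {β : ℝ} (hβ : β ≠ 0)
    {α0 : ℝ} (hα0 : 0 < α0) (α1 : ℝ) :
    HasDerivAt (fun a => dObj I J K w t n β α0 a)
      ((β + 1) / (((I : ℝ) * J) ^ (β + 1) * K) * ∑ i, ∑ j,
        ((K : ℝ) * Fcdf α0 α1 (w i) (t j) - n i j) * fpdf α0 α1 (w i) (t j) * t j * w i *
          (Fcdf α0 α1 (w i) (t j) ^ (β - 1) + (1 - Fcdf α0 α1 (w i) (t j)) ^ (β - 1))) α1 := by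
  refine (hasDerivAt_dPD_phat hI hJ hK n hβ (fun i j => hasDerivAt_Fcdf_snd α0 α1 (w i) (t j))
    (fun i j => Fcdf_pos hα0 (ht j)) (fun i j => Fcdf_lt_one α0 α1 (w i) (t j))).congr_deriv ?_
  simp only [mul_sum]
  exact sum_congr rfl fun i _ => sum_congr rfl fun j _ => by ring

theorem dpd_critical_iff_estimating_equations_general
    (I J K : ℕ) (hI : 1 ≤ I) (hJ : 1 ≤ J) (hK : 1 ≤ K)
    (w : Fin I → ℝ) (t : Fin J → ℝ) (ht : ∀ j, 0 < t j)
    (n : Fin I → Fin J → ℕ)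
    (β : ℝ) (hβ : 0 < β) (α0 α1 : ℝ) (hα0 : 0 < α0) :
    (deriv (fun a : ℝ => dObj I J K w t n β a α1) α0 = 0
      ∧ deriv (fun a : ℝ => dObj I J K w t n β α0 a) α1 = 0)
    ↔
    ((∑ i, ∑ j,
        ((K : ℝ) * Fcdf α0 α1 (w i) (t j) - (n i j : ℝ)) * fpdf α0 α1 (w i) (t j) * t j *
          (Fcdf α0 α1 (w i) (t j) ^ (β - 1) + (1 - Fcdf α0 α1 (w i) (t j)) ^ (β - 1))) = 0
      ∧
     (∑ i, ∑ j,
        ((K : ℝ) * Fcdf α0 α1 (w i) (t j) - (n i j : ℝ)) * fpdf α0 α1 (w i) (t j) * t j * w i *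
          (Fcdf α0 α1 (w i) (t j) ^ (β - 1) + (1 - Fcdf α0 α1 (w i) (t j)) ^ (β - 1))) = 0) := by
  have hK0 : K ≠ 0 := Nat.one_le_iff_ne_zero.mp hK
  have hKpos : (0 : ℝ) < K := by exact_mod_cast hK
  have hC : (β + 1) / (((I : ℝ) * J) ^ (β + 1) * K) ≠ 0 := by positivity
  rw [(hasDerivAt_dObj_fst hI hJ hK0 w ht n hβ.ne' hα0 α1).deriv,
    (hasDerivAt_dObj_snd hI hJ hK0 w ht n hβ.ne' hα0 α1).deriv,
    mul_eq_zero_iff_left (div_ne_zero hC hα0.ne'), mul_eq_zero_iff_left hC]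

/-- the two partial derivatives of `α ↦ d_β(p̂, p(α))` vanish at `α`
if and only if the estimating equations (5) and (5B) hold. -/
theorem dpd_critical_iff_estimating_equations
    (I J K : ℕ) (hI : 1 ≤ I) (hJ : 1 ≤ J) (hK : 1 ≤ K)
    (w : Fin I → ℝ) (t : Fin J → ℝ) (hw : ∀ i, 0 < w i) (ht : ∀ j, 0 < t j)
    (n : Fin I → Fin J → ℕ) (hn : ∀ i j, n i j ≤ K)
    (β : ℝ) (hβ : 0 < β) (α0 α1 : ℝ) (hα0 : 0 < α0) :
    (deriv (fun a : ℝ => dObj I J K w t n β a α1) α0 = 0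
      ∧ deriv (fun a : ℝ => dObj I J K w t n β α0 a) α1 = 0)
    ↔
    ((∑ i, ∑ j,
        ((K : ℝ) * Fcdf α0 α1 (w i) (t j) - (n i j : ℝ)) * fpdf α0 α1 (w i) (t j) * t j *
          (Fcdf α0 α1 (w i) (t j) ^ (β - 1) + (1 - Fcdf α0 α1 (w i) (t j)) ^ (β - 1))) = 0
      ∧
     (∑ i, ∑ j,
        ((K : ℝ) * Fcdf α0 α1 (w i) (t j) - (n i j : ℝ)) * fpdf α0 α1 (w i) (t j) * t j * w i *
          (Fcdf α0 α1 (w i) (t j) ^ (β - 1) + (1 - Fcdf α0 α1 (w i) (t j)) ^ (β - 1))) = 0) :=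
  dpd_critical_iff_estimating_equations_general I J K hI hJ hK w t ht n β hβ α0 α1 hα0
end
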